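/- Consider a MinConCD instance with k = 2, budget B, and requirements M_1, M_2 > 0, with the matroid (Y, I) where Y = ∪_{j∈T}{a_j, b_j} and I = {A ⊆ Y : |A ∩ {a_j,b_j}| ≤ 1 ∀j, |A| ≤ B}, and the function F(A) = min(|V_1(X^A)|/M_1, 1) + min(|V_2(X^A)|/M_2, 1). Suppose a feasible solution exists, i.e., disjoint X_1, X_2 ⊆ T with |X_1| + |X_2| ≤ B, |V_1| ≥ M_1 and |V_2| ≥ M_2. Then max_{A∈I} F(A) = 2, and every A ∈ I with F(A) ≥ (1 − 1/e)·max_{A'∈I} F(A') yields disjoint descriptors X^A_1, X^A_2 with |X^A_1| + |X^A_2| ≤ B, |V_1(X^A)| ≥ (1 − 2/e)·M_1 and |V_2(X^A)| ≥ (1 − 2/e)·M_2; i.e., such an A is a (1 − 2/e, 1)-approximate solution. -/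

import Mathlib

/-!
Encode a pair of descriptors `X₁, X₂ ⊆ T` as the set `X₁ × {false} ∪ X₂ × {true}` of tagged
elements; it is independent in the matroid exactly when the descriptors are disjoint and
`|X₁| + |X₂| ≤ B`. A feasible solution therefore gives an independent set with `F = 2`, and
`F ≤ 2` always since both summands are capped at `1`. If `F A ≥ 2 (1 - 1/e)`, then, because the
other summand is at most `1`, each capped ratio is at least `1 - 2/e`, which is the claimed
coverage. Disjointness and the budget bound for `X^A` come from `A` being independent.
-/

namespace MinConCD

open Finset

variable {α : Type*} [DecidableEq α]

def ofDescriptors (X₁ X₂ : Finset α) : Finset (α × Bool) := X₁ ×ˢ {false} ∪ X₂ ×ˢ {true}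

@[simp]
theorem mk_false_mem_ofDescriptors {X₁ X₂ : Finset α} {j : α} :
    (j, false) ∈ ofDescriptors X₁ X₂ ↔ j ∈ X₁ := by
  simp [ofDescriptors]

@[simp]
theorem mk_true_mem_ofDescriptors {X₁ X₂ : Finset α} {j : α} :
    (j, true) ∈ ofDescriptors X₁ X₂ ↔ j ∈ X₂ := by
  simp [ofDescriptors]

theorem card_ofDescriptors (X₁ X₂ : Finset α) :
    (ofDescriptors X₁ X₂).card = X₁.card + X₂.card := by
  rw [ofDescriptors, card_union_of_disjoint, card_product, card_product, card_singleton,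
    card_singleton, mul_one, mul_one]
  exact disjoint_product.2 (Or.inr (by simp))

theorem card_filter_fst_ofDescriptors_le_one {X₁ X₂ : Finset α} (h : Disjoint X₁ X₂) (j : α) :
    ((ofDescriptors X₁ X₂).filter fun p => p.1 = j).card ≤ 1 := by
  refine card_le_one.2 ?_
  rintro ⟨a, b⟩ hab ⟨c, d⟩ hcd
  simp only [mem_filter] at hab hcd
  obtain ⟨hab, rfl⟩ := hab
  obtain ⟨hcd, rfl⟩ := hcd
  cases b <;> cases d <;> simp_all [disjoint_left.1 h]

variable [Fintype α]

def descriptor (A : Finset (α × Bool)) (b : Bool) : Finset α := univ.filter fun j => (j, b) ∈ A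

theorem ofDescriptors_descriptor (A : Finset (α × Bool)) :
    ofDescriptors (descriptor A false) (descriptor A true) = A := by
  ext ⟨j, b⟩
  cases b <;> simp [descriptor]

theorem card_descriptor_add_card_descriptor (A : Finset (α × Bool)) :
    (descriptor A false).card + (descriptor A true).card = A.card := by
  rw [← card_ofDescriptors, ofDescriptors_descriptor]

theorem disjoint_descriptor_of_card_filter_fst_le_one {A : Finset (α × Bool)}
    (hA : ∀ j, (A.filter fun p => p.1 = j).card ≤ 1) :
    Disjoint (descriptor A false) (descriptor A true) := by
  refine disjoint_left.2 fun j hf ht => ?_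
  simp only [descriptor, mem_filter, mem_univ, true_and] at hf ht
  have hpair : ({(j, false), (j, true)} : Finset (α × Bool)) ⊆ A.filter fun p => p.1 = j := by
    simp [insert_subset_iff, hf, ht]
  have := (card_le_card hpair).trans (hA j)
  simp at this

end MinConCD

section CappedRatio

variable {x M c : ℝ}

theorem min_div_one_eq_one (hM : 0 < M) (h : M ≤ x) : min (x / M) 1 = 1 :=
  min_eq_right ((one_le_div hM).2 h)

theorem mul_le_of_le_min_div_one (hM : 0 < M) (h : c ≤ min (x / M) 1) : c * M ≤ x :=
  (le_div_iff₀ hM).1 (h.trans (min_le_left _ _))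

theorem sub_two_mul_le_min_div_one_of_le_add {y N : ℝ}
    (h : (1 - c) * 2 ≤ min (x / M) 1 + min (y / N) 1) :
    1 - 2 * c ≤ min (x / M) 1 ∧ 1 - 2 * c ≤ min (y / N) 1 := by
  constructor <;> linarith [min_le_right (x / M) 1, min_le_right (y / N) 1]

end CappedRatio

open MinConCD in
theorem stmt18 {S T : Type*} [Fintype T] [DecidableEq T]
    (C1 C2 : Finset S)
    (t : S → Finset T) (B : ℕ)
    (M1 M2 : ℝ) (hM1 : 0 < M1) (hM2 : 0 < M2)
    (I : Finset (T × Bool) → Prop)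
    (hI : ∀ A, I A ↔
      ((∀ j : T, (A.filter fun p => p.1 = j).card ≤ 1) ∧ A.card ≤ B))
    (F : Finset (T × Bool) → ℝ)
    (hF : ∀ A, F A =
      min (((C1.filter fun i => ∃ j ∈ t i, (j, false) ∈ A).card : ℝ) / M1) 1
      + min (((C2.filter fun i => ∃ j ∈ t i, (j, true) ∈ A).card : ℝ) / M2) 1)
    (hfeas : ∃ X1 X2 : Finset T, Disjoint X1 X2 ∧ X1.card + X2.card ≤ B ∧
      M1 ≤ ((C1.filter fun i => (t i ∩ X1).Nonempty).card : ℝ) ∧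
      M2 ≤ ((C2.filter fun i => (t i ∩ X2).Nonempty).card : ℝ)) :
    ((∃ A, I A ∧ F A = 2) ∧ (∀ A, I A → F A ≤ 2))
    ∧ (∀ A : Finset (T × Bool), I A →
        (∀ A' : Finset (T × Bool), I A' → (1 - 1 / Real.exp 1) * F A' ≤ F A) →
        Disjoint (Finset.univ.filter fun j : T => (j, false) ∈ A)
          (Finset.univ.filter fun j : T => (j, true) ∈ A)
        ∧ (Finset.univ.filter fun j : T => (j, false) ∈ A).card
            + (Finset.univ.filter fun j : T => (j, true) ∈ A).card ≤ B
        ∧ (1 - 2 / Real.exp 1) * M1 ≤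
            ((C1.filter fun i => ∃ j ∈ t i, (j, false) ∈ A).card : ℝ)
        ∧ (1 - 2 / Real.exp 1) * M2 ≤
            ((C2.filter fun i => ∃ j ∈ t i, (j, true) ∈ A).card : ℝ)) := by
  obtain ⟨X1, X2, hdisj, hbudget, hV1, hV2⟩ := hfeas
  have hIopt : I (ofDescriptors X1 X2) :=
    (hI _).2 ⟨card_filter_fst_ofDescriptors_le_one hdisj,
      (card_ofDescriptors X1 X2).le.trans hbudget⟩
  have hFopt : F (ofDescriptors X1 X2) = 2 := by
    simp only [hF, mk_false_mem_ofDescriptors, mk_true_mem_ofDescriptors,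
      ← Finset.not_disjoint_iff_nonempty_inter, Finset.not_disjoint_iff] at hV1 hV2 ⊢
    rw [min_div_one_eq_one hM1 hV1, min_div_one_eq_one hM2 hV2]
    norm_num
  have hF_le (A) : F A ≤ 2 := by
    rw [hF, ← one_add_one_eq_two]
    exact add_le_add (min_le_right _ _) (min_le_right _ _)
  refine ⟨⟨⟨_, hIopt, hFopt⟩, fun A _ => hF_le A⟩, fun A hA hmax => ?_⟩
  obtain ⟨hfiber, hcard⟩ := (hI A).1 hA
  have hFA := hmax _ hIopt
  rw [hFopt, hF] at hFA
  obtain ⟨hcov1, hcov2⟩ := sub_two_mul_le_min_div_one_of_le_add hFA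
  rw [mul_one_div] at hcov1 hcov2
  exact ⟨disjoint_descriptor_of_card_filter_fst_le_one hfiber,
    (card_descriptor_add_card_descriptor A).trans_le hcard,
    mul_le_of_le_min_div_one hM1 hcov1, mul_le_of_le_min_div_one hM2 hcov2⟩
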